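/- Let (θ_n)_{n≥0} be an inexact BCD-PR output satisfying Assumptions (A1)–(A3). Then for every n ≥ 1: f(θ_{n−1}) − f(θ_n) ≥ (τ_n^−/2) ‖θ_{n−1} − θ_n‖² − m Δ_n, where τ_n^− := min_{1≤i≤m} τ_n^(i). -/

import Mathlib

/-!
Walk from `θ_{n-1}` to `θ_n` one block at a time. The `i`-th step decreases `f` by
`g_n^{(i)}(θ_{n-1}^{(i)}) - g_n^{(i)}(θ_n^{(i)}) + (τ_n^{(i)}/2)‖θ_n^{(i)} - θ_{n-1}^{(i)}‖²`,
and the difference of the `g_n^{(i)}` values is at least `-Δ_n` because `θ_{n-1}^{(i)}` is a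
competitor in the infimum defining the optimality gap. Summing the `m` steps telescopes, and
the block norms add up to `‖θ_{n-1} - θ_n‖²`.
-/

noncomputable section

open scoped RealInnerProductSpace

namespace BCD3

/-- The `i`-th block space `ℝ^{I_i}`. -/
abbrev Blk {m : ℕ} (I : Fin m → ℕ) (i : Fin m) : Type := EuclideanSpace ℝ (Fin (I i))

/-- The full parameter space `ℝ^{I_1 + ⋯ + I_m}`, as an ℓ²-product of the blocks. -/
abbrev Full {m : ℕ} (I : Fin m → ℕ) : Type := PiLp 2 (fun i : Fin m => EuclideanSpace ℝ (Fin (I i)))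

/-- The point whose blocks `j < i` come from `a`, block `i` is `x`, and blocks `j > i`
come from `b`. -/
def mixUpd {m : ℕ} {I : Fin m → ℕ} (a b : Full I) (i : Fin m) (x : Blk I i) : Full I :=
  WithLp.toLp 2 (Function.update (fun j => if j < i then a j else b j) i x)

/-- The marginal loss `f_n^{(i)}(x) = f(θ_n^{(1)},…,θ_n^{(i-1)}, x, θ_{n-1}^{(i+1)},…)`. -/
def fb {m : ℕ} {I : Fin m → ℕ} (f : Full I → ℝ) (θ : ℕ → Full I) (n : ℕ) (i : Fin m)
    (x : Blk I i) : ℝ :=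
  f (mixUpd (θ n) (θ (n - 1)) i x)

/-- The proximally regularized marginal loss
`g_n^{(i)}(x) = f_n^{(i)}(x) + (τ_n^{(i)}/2)‖x - θ_{n-1}^{(i)}‖²`. -/
def gb {m : ℕ} {I : Fin m → ℕ} (f : Full I → ℝ) (θ : ℕ → Full I) (τ : ℕ → Fin m → ℝ)
    (n : ℕ) (i : Fin m) (x : Blk I i) : ℝ :=
  fb f θ n i x + τ n i / 2 * ‖x - θ (n - 1) i‖ ^ 2

/-- The optimality gap `Δ_n = max_i ( g_n^{(i)}(θ_n^{(i)}) - inf_{Θ^{(i)}} g_n^{(i)} )`. -/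
def gap {m : ℕ} {I : Fin m → ℕ} (f : Full I → ℝ) (θ : ℕ → Full I)
    (S : ∀ i : Fin m, Set (Blk I i)) (τ : ℕ → Fin m → ℝ) (n : ℕ) : ℝ :=
  ⨆ i, (gb f θ τ n i (θ n i) - sInf (gb f θ τ n i '' S i))

section Interpolation

variable {m : ℕ} {I : Fin m → ℕ}

def mixUpTo (a b : Full I) (k : ℕ) : Full I :=
  WithLp.toLp 2 fun j => if (j : ℕ) < k then a j else b j

theorem mixUpTo_zero (a b : Full I) : mixUpTo a b 0 = b := by
  ext1 j; simp [mixUpTo]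

theorem mixUpTo_card (a b : Full I) : mixUpTo a b m = a := by
  ext1 j; simp [mixUpTo]

theorem mixUpd_apply_right (a b : Full I) (i : Fin m) :
    mixUpd a b i (b i) = mixUpTo a b i := by
  ext1 j
  by_cases h : j = i
  · subst h; simp [mixUpd, mixUpTo]
  · simp only [mixUpd, mixUpTo, WithLp.ofLp_toLp, Function.update_of_ne h, Fin.lt_def]

theorem mixUpd_apply_left (a b : Full I) (i : Fin m) :
    mixUpd a b i (a i) = mixUpTo a b (i + 1) := by
  ext1 j
  by_cases h : j = i
  · subst h; simp [mixUpd, mixUpTo]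
  · have hlt : (j : ℕ) < i ↔ (j : ℕ) < i + 1 := by
      have : (j : ℕ) ≠ i := Fin.val_ne_of_ne h
      omega
    simp only [mixUpd, mixUpTo, WithLp.ofLp_toLp, Function.update_of_ne h, Fin.lt_def, hlt]

theorem sub_eq_sum_mixUpTo (f : Full I → ℝ) (a b : Full I) :
    f b - f a = ∑ i : Fin m, (f (mixUpTo a b i) - f (mixUpTo a b (i + 1))) := by
  rw [Fin.sum_univ_eq_sum_range (fun k => f (mixUpTo a b k) - f (mixUpTo a b (k + 1))),
    Finset.sum_range_sub' (fun k => f (mixUpTo a b k)), mixUpTo_zero, mixUpTo_card]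

end Interpolation

section Gap

variable {m : ℕ} {I : Fin m → ℕ} {S : ∀ i : Fin m, Set (Blk I i)} {f : Full I → ℝ}
  {τ : ℕ → Fin m → ℝ} {θ : ℕ → Full I} {n : ℕ}

theorem bddBelow_gb_image (hf0 : ∀ x, 0 ≤ f x) {i : Fin m} (hτ : 0 ≤ τ n i) :
    BddBelow (gb f θ τ n i '' S i) := by
  refine ⟨0, ?_⟩
  rintro _ ⟨x, -, rfl⟩
  have hfx := hf0 (mixUpd (θ n) (θ (n - 1)) i x)
  unfold gb fb
  positivity

theorem sub_sInf_le_gap (i : Fin m) :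
    gb f θ τ n i (θ n i) - sInf (gb f θ τ n i '' S i) ≤ gap f θ S τ n := by
  unfold gap
  exact le_ciSup (Finite.bddAbove_range fun j =>
    gb f θ τ n j (θ n j) - sInf (gb f θ τ n j '' S j)) i

theorem gb_le_add_gap (hf0 : ∀ x, 0 ≤ f x) {i : Fin m} (hτ : 0 ≤ τ n i) {x : Blk I i}
    (hx : x ∈ S i) : gb f θ τ n i (θ n i) ≤ gb f θ τ n i x + gap f θ S τ n := by
  calc gb f θ τ n i (θ n i)
      = (gb f θ τ n i (θ n i) - sInf (gb f θ τ n i '' S i)) + sInf (gb f θ τ n i '' S i) := by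
        ring
    _ ≤ gap f θ S τ n + gb f θ τ n i x :=
        add_le_add (sub_sInf_le_gap i) (csInf_le (bddBelow_gb_image hf0 hτ) ⟨x, hx, rfl⟩)
    _ = gb f θ τ n i x + gap f θ S τ n := add_comm _ _

theorem block_descent (hf0 : ∀ x, 0 ≤ f x) {i : Fin m} (hτ : 0 ≤ τ n i)
    (hθ : θ (n - 1) i ∈ S i) :
    τ n i / 2 * ‖θ (n - 1) i - θ n i‖ ^ 2 - gap f θ S τ n ≤
      f (mixUpTo (θ n) (θ (n - 1)) i) - f (mixUpTo (θ n) (θ (n - 1)) (i + 1)) := by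
  have h := gb_le_add_gap (θ := θ) hf0 hτ hθ
  simp only [gb, fb, mixUpd_apply_left, mixUpd_apply_right, sub_self, norm_zero] at h
  rw [norm_sub_rev]
  linarith

end Gap

theorem stmt3_general {m : ℕ} {I : Fin m → ℕ}
    (S : ∀ i : Fin m, Set (Blk I i))
    (f : Full I → ℝ) (hf0 : ∀ x, 0 ≤ f x)
    (τ : ℕ → Fin m → ℝ) (hτ : ∀ n i, 0 < τ n i)
    (θ : ℕ → Full I) (hθ : ∀ n i, θ n i ∈ S i) :
    ∀ n : ℕ, 1 ≤ n →
      f (θ (n - 1)) - f (θ n) ≥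
        (⨅ i, τ n i) / 2 * ‖θ (n - 1) - θ n‖ ^ 2 - m * gap f θ S τ n := by
  intro n _
  have hτmin : ∀ i, (⨅ j, τ n j) ≤ τ n i := ciInf_le (Finite.bddBelow_range _)
  have hnorm : ‖θ (n - 1) - θ n‖ ^ 2 = ∑ i, ‖θ (n - 1) i - θ n i‖ ^ 2 := by
    simp [PiLp.norm_sq_eq_of_L2]
  rw [ge_iff_le, sub_eq_sum_mixUpTo, hnorm, Finset.mul_sum]
  calc ∑ i, (⨅ j, τ n j) / 2 * ‖θ (n - 1) i - θ n i‖ ^ 2 - m * gap f θ S τ n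
      = ∑ i, ((⨅ j, τ n j) / 2 * ‖θ (n - 1) i - θ n i‖ ^ 2 - gap f θ S τ n) := by
        simp [Finset.sum_sub_distrib]
    _ ≤ ∑ i, (τ n i / 2 * ‖θ (n - 1) i - θ n i‖ ^ 2 - gap f θ S τ n) := by
        gcongr with i; exact hτmin i
    _ ≤ _ := Finset.sum_le_sum fun i _ => block_descent hf0 (hτ n i).le (hθ (n - 1) i)

/-- **Forward monotonicity.** For an inexact BCD-PR output under (A1)–(A3),
`f(θ_{n-1}) - f(θ_n) ≥ (τ_n⁻/2)‖θ_{n-1} - θ_n‖² - m·Δ_n` for all `n ≥ 1`. -/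
theorem stmt3 {m : ℕ} (hm : 0 < m) {I : Fin m → ℕ}
    (S : ∀ i : Fin m, Set (Blk I i))
    (hSne : ∀ i, (S i).Nonempty) (hSconv : ∀ i, Convex ℝ (S i))
    (f : Full I → ℝ) (hf : ContDiff ℝ 1 f) (hf0 : ∀ x, 0 ≤ f x)
    (L : Fin m → ℝ) (hL : ∀ i, 0 < L i)
    -- (A1): block-wise Lipschitz gradient
    (hA1 : ∀ (i : Fin m) (b : Full I), (∀ j, b j ∈ S j) →
      LipschitzOnWith (Real.toNNReal (L i))
        (fun x : Blk I i => gradient f (WithLp.toLp 2 (Function.update b i x))) (S i))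
    -- (A2): compact sublevel sets
    (hA2 : ∀ a : ℝ, IsCompact {x : Full I | (∀ i, x i ∈ S i) ∧ f x ≤ a})
    (τ : ℕ → Fin m → ℝ) (hτ : ∀ n i, 0 < τ n i)
    (θ : ℕ → Full I) (hθ : ∀ n i, θ n i ∈ S i)
    -- (A3): summable optimality gaps
    (hA3 : Summable (fun n : ℕ => gap f θ S τ (n + 1))) :
    ∀ n : ℕ, 1 ≤ n →
      f (θ (n - 1)) - f (θ n) ≥
        (⨅ i, τ n i) / 2 * ‖θ (n - 1) - θ n‖ ^ 2 - m * gap f θ S τ n :=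
  stmt3_general S f hf0 τ hτ θ hθ

end BCD3
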